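/- Let G be a finite group, H ≤ G, and X a based H-set (or H-space). There is a W_G(K)-equivariant bijection (G ×_H X)^K ≅ ⨿_{[KgH] ∈ (K:G:H)/W_G(K)} W_G(K) ×_{W_{gHg⁻¹}(K)} (c_g^* X)^{g⁻¹Kg}, where c_g^* X is X with the gHg⁻¹-action pulled back along conjugation by g. -/

import Mathlib

section

variable {G : Type*} [Group G] (K H : Subgroup G) (X : Type*) [MulAction H X]

/-- The balanced-product relation defining the induced `G`-set `G ×_H X` of an `H`-set `X`. -/
def indSetoid : Setoid (G × X) where
  r p q := ∃ h : H, q.1 = p.1 * h ∧ q.2 = h⁻¹ • p.2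
  iseqv := by
    constructor
    · exact fun p => ⟨1, by simp⟩
    · rintro p q ⟨h, h1, h2⟩
      exact ⟨h⁻¹, by simp [h1, mul_assoc], by simp [h2]⟩
    · rintro p q r ⟨h, h1, h2⟩ ⟨h', h1', h2'⟩
      exact ⟨h * h', by simp [h1', h1, mul_assoc], by simp [h2', h2, mul_smul]⟩

/-- The induced `G`-set `G ×_H X`. -/
def IndGH : Type _ := Quotient (indSetoid H X)

/-- The `G`-action on `G ×_H X`. -/
def IndGH.act (g : G) : IndGH H X → IndGH H X :=
  Quotient.map (fun p => (g * p.1, p.2))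
    (by rintro p q ⟨h, h1, h2⟩; exact ⟨h, by simp [h1, mul_assoc], h2⟩)

lemma IndGH.act_mul (a b : G) (z : IndGH H X) :
    IndGH.act H X (a * b) z = IndGH.act H X a (IndGH.act H X b z) :=
  Quotient.inductionOn z fun p => by
    simp only [IndGH.act, Quotient.map_mk]
    rw [mul_assoc]

/-- The `K`-fixed points of `G ×_H X`. -/
def FixK : Type _ := {z : IndGH H X // ∀ k ∈ K, IndGH.act H X k z = z}

lemma fixK_act_normalizer (n : (Subgroup.normalizer (K : Set G))) (z : FixK K H X) :
    ∀ k ∈ K, IndGH.act H X k (IndGH.act H X (n : G) z.1) = IndGH.act H X (n : G) z.1 := by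
  intro k hk
  have hmem : (n : G)⁻¹ * k * (n : G) ∈ K := by
    have := (Subgroup.mem_normalizer_iff.mp ((Subgroup.normalizer (K : Set G)).inv_mem n.2) k).mp hk
    rwa [inv_inv] at this
  have h1 : k * (n : G) = (n : G) * ((n : G)⁻¹ * k * (n : G)) := by group
  rw [← IndGH.act_mul, h1, IndGH.act_mul, z.2 _ hmem]

/-- The action of (a representative of) the Weyl group `W_G(K) = N_G(K)/K` on the `K`-fixed
points of `G ×_H X`. -/
def FixK.act (n : (Subgroup.normalizer (K : Set G))) (z : FixK K H X) : FixK K H X :=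
  ⟨IndGH.act H X (n : G) z.1, fixK_act_normalizer K H X n z⟩

/-- Admissible double-coset representatives: `g` with `g⁻¹Kg ⊆ H`. -/
def Admissibles : Type _ := {g : G // ∀ k ∈ K, g⁻¹ * k * g ∈ H}

/-- Admissible representatives up to the `W_G(K)`-action on double cosets in `K\G/H`,
i.e. the set of orbits `(K:G:H)/W_G(K)`. -/
def weylOrbitSetoid : Setoid (Admissibles K H) where
  r g g' := ∃ n ∈ (Subgroup.normalizer (K : Set G)), DoubleCoset.mk K H (n * g.1) = DoubleCoset.mk K H g'.1
  iseqv := by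
    constructor
    · exact fun g => ⟨1, (Subgroup.normalizer (K : Set G)).one_mem, by rw [one_mul]⟩
    · rintro g g' ⟨n, hn, hmk⟩
      obtain ⟨k, hk, h, hh, hEq⟩ := (DoubleCoset.eq K H (n * g.1) g'.1).mp hmk
      refine ⟨n⁻¹, (Subgroup.normalizer (K : Set G)).inv_mem hn, ?_⟩
      rw [DoubleCoset.eq]
      refine ⟨(n⁻¹ * k * n)⁻¹, K.inv_mem ?_, h⁻¹, H.inv_mem hh, ?_⟩
      · have := (Subgroup.mem_normalizer_iff.mp ((Subgroup.normalizer (K : Set G)).inv_mem hn) k).mp hk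
        rwa [inv_inv] at this
      · rw [hEq]; group
    · rintro g g' g'' ⟨n, hn, e⟩ ⟨n', hn', e'⟩
      obtain ⟨k, hk, h, hh, hEq⟩ := (DoubleCoset.eq K H (n * g.1) g'.1).mp e
      obtain ⟨k', hk', h', hh', hEq'⟩ := (DoubleCoset.eq K H (n' * g'.1) g''.1).mp e'
      refine ⟨n' * n, mul_mem hn' hn, ?_⟩
      rw [DoubleCoset.eq]
      refine ⟨k' * (n' * k * n'⁻¹), K.mul_mem hk' ((Subgroup.mem_normalizer_iff.mp hn' k).mp hk),
        h * h', H.mul_mem hh hh', ?_⟩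
      rw [hEq', hEq]; group

/-- The fixed points `X^{g⁻¹Kg}` of `c_g^* X`, for an admissible representative `g`. -/
abbrev FixedOfConj (c : Quotient (weylOrbitSetoid K H)) : Type _ :=
  {x : X // ∀ (k : G) (hk : k ∈ K),
    (⟨(Quotient.out c).1⁻¹ * k * (Quotient.out c).1,
      (Quotient.out c).2 k hk⟩ : H) • x = x}

/-- The balanced product `W_G(K) ×_{W_{gHg⁻¹}(K)} X^{g⁻¹Kg}`, presented as a quotient of
`N_G(K) × X^{g⁻¹Kg}`: `(n, x) ~ (k·n·(ghg⁻¹), h⁻¹x)` for `k ∈ K` and `h ∈ H` with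
`ghg⁻¹` normalizing `K` (the latter is automatic), using the identification
`W_{gHg⁻¹}(K) ≅ W_H(g⁻¹Kg)` by conjugation. -/
abbrev fiberRel (c : Quotient (weylOrbitSetoid K H))
    (p q : (Subgroup.normalizer (K : Set G)) × FixedOfConj K H X c) : Prop :=
  ∃ (k : K) (h : H),
    ((q.1 : G) = k * p.1 * ((Quotient.out c).1 * h * (Quotient.out c).1⁻¹)) ∧
    (q.2 : X) = h⁻¹ • (p.2 : X)

def fiberSetoid (c : Quotient (weylOrbitSetoid K H)) :
    Setoid ((Subgroup.normalizer (K : Set G)) × FixedOfConj K H X c) where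
  r := fiberRel K H X c
  iseqv := by
    constructor
    · intro p
      refine ⟨1, 1, by push_cast; group, by simp⟩
    · rintro p q ⟨k, h, e1, e2⟩
      refine ⟨k⁻¹, h⁻¹, by rw [e1]; push_cast; group, by rw [e2, inv_inv, smul_inv_smul]⟩
    · rintro p q r ⟨k, h, e1, e2⟩ ⟨k', h', e1', e2'⟩
      refine ⟨k' * k, h * h', by rw [e1', e1]; push_cast; group,
        by rw [e2', e2, smul_smul, ← mul_inv_rev]⟩

/-- The summand `W_G(K) ×_{W_{gHg⁻¹}(K)} (c_g^* X)^{g⁻¹Kg}` attached to an orbit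
`[KgH] ∈ (K:G:H)/W_G(K)`. -/
def Fib (c : Quotient (weylOrbitSetoid K H)) : Type _ :=
  Quotient (fiberSetoid K H X c)

/-- The `W_G(K)`-action (via representatives in `N_G(K)`) on the summand `Fib c`. -/
def Fib.act (c : Quotient (weylOrbitSetoid K H)) (n : (Subgroup.normalizer (K : Set G))) :
    Fib K H X c → Fib K H X c :=
  Quotient.map (fun p => (n * p.1, p.2))
    (by
      rintro p q ⟨k, h, h1, h2⟩
      refine ⟨⟨(n : G) * k * (n : G)⁻¹, (Subgroup.mem_normalizer_iff.mp n.2 k).mp k.2⟩, h,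
        ?_, h2⟩
      show ((n * q.1 : (Subgroup.normalizer (K : Set G))) : G) = _
      push_cast
      rw [h1]
      group)

end

/-! A point `[g, x]` of `G ×_H X` is `K`-fixed exactly when `g⁻¹Kg ⊆ H` and `x` is fixed by
`g⁻¹Kg`. Such a `g` can be moved by `N_G(K)` on the left and within its double coset `KgH`
to the chosen representative `g₀` of its `W_G(K)`-orbit, so every fixed point is `[n g₀, x]`
with `n ∈ N_G(K)` and `x ∈ X^{g₀⁻¹Kg₀}`; the pairs `(n, x)` giving the same point are exactly
those identified in the balanced product `W_G(K) ×_{W_{g₀Hg₀⁻¹}(K)} X^{g₀⁻¹Kg₀}`. -/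

namespace IndGH

variable {G : Type*} [Group G] {K : Subgroup G} (H : Subgroup G) {X : Type*} [MulAction H X]

def mk (g : G) (x : X) : IndGH H X := Quotient.mk (indSetoid H X) (g, x)

variable {H}

@[simp]
lemma act_mk (a g : G) (x : X) : act H X a (mk H g x) = mk H (a * g) x := rfl

lemma mk_eq_mk_iff {g g' : G} {x x' : X} :
    mk H g x = mk H g' x' ↔ ∃ h : H, g' = g * h ∧ x' = h⁻¹ • x :=
  Quotient.eq

lemma mk_mul_smul (g : G) (h : H) (x : X) : mk H (g * h) x = mk H g (h • x) :=
  mk_eq_mk_iff.2 ⟨h⁻¹, by simp [mul_assoc], by simp⟩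

lemma act_mk_eq_self_iff {k g : G} {x : X} :
    act H X k (mk H g x) = mk H g x ↔
      ∃ hk : g⁻¹ * k * g ∈ H, (⟨_, hk⟩ : H) • x = x := by
  constructor
  · rw [act_mk, mk_eq_mk_iff]
    rintro ⟨h, hg, hx⟩
    have hconj : g⁻¹ * k * g = ((h⁻¹ : H) : G) := by
      rw [InvMemClass.coe_inv, eq_inv_iff_mul_eq_one]
      calc g⁻¹ * k * g * h = g⁻¹ * (k * g * h) := by group
        _ = 1 := by rw [← hg, inv_mul_cancel]
    refine ⟨hconj ▸ (h⁻¹).2, ?_⟩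
    rw [show (⟨_, _⟩ : H) = h⁻¹ from Subtype.ext hconj, ← hx]
  · rintro ⟨hk, hx⟩
    calc act H X k (mk H g x) = mk H (g * (g⁻¹ * k * g)) x := by rw [act_mk]; group
      _ = mk H g x := by rw [mk_mul_smul g ⟨_, hk⟩, hx]

lemma mk_fixed_iff {g : G} {x : X} :
    (∀ k ∈ K, act H X k (mk H g x) = mk H g x) ↔
      ∃ hg : ∀ k ∈ K, g⁻¹ * k * g ∈ H, ∀ k (hk : k ∈ K), (⟨_, hg k hk⟩ : H) • x = x := by
  simp only [act_mk_eq_self_iff]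
  exact ⟨fun h => ⟨fun k hk => (h k hk).1, fun k hk => (h k hk).2⟩,
    fun ⟨hg, hx⟩ k hk => ⟨hg k hk, hx k hk⟩⟩

end IndGH

section

open IndGH

variable {G : Type*} [Group G] {K H : Subgroup G} {X : Type*} [MulAction H X]

local notation "N" => Subgroup.normalizer (K : Set G)

lemma weylOrbit_eq_of_out_eq_mul {c c' : Quotient (weylOrbitSetoid K H)} {m h : G}
    (hm : m ∈ N) (hh : h ∈ H) (e : (Quotient.out c').1 = m * (Quotient.out c).1 * h) :
    c = c' := by
  rw [← Quotient.out_eq c, ← Quotient.out_eq c']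
  exact Quotient.sound
    ⟨m, hm, (DoubleCoset.eq K H _ _).2 ⟨1, K.one_mem, h, hh, by rw [e, one_mul]⟩⟩

noncomputable def FixedOfConj.toFixK {c : Quotient (weylOrbitSetoid K H)}
    (x : FixedOfConj K H X c) : FixK K H X :=
  ⟨mk H (Quotient.out c).1 (x : X), mk_fixed_iff.2 ⟨_, x.2⟩⟩

variable (K H X) in
noncomputable def Fib.toFixK (c : Quotient (weylOrbitSetoid K H)) :
    Fib K H X c → FixK K H X :=
  Quotient.lift (fun p => FixK.act K H X p.1 p.2.toFixK) <| by
    rintro ⟨n, x⟩ ⟨n', x'⟩ ⟨k, h, hn', hx'⟩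
    refine Subtype.ext (Eq.symm ?_)
    change mk H ((n' : G) * _) (x' : X) = mk H ((n : G) * _) (x : X)
    calc mk H ((n' : G) * (Quotient.out c).1) (x' : X)
        = mk H ((k : G) * ((n : G) * (Quotient.out c).1) * h) (h⁻¹ • (x : X)) := by
          rw [hn', hx']; group
      _ = IndGH.act H X k (mk H ((n : G) * (Quotient.out c).1) (x : X)) := by
          rw [mk_mul_smul, smul_inv_smul, act_mk]
      _ = mk H ((n : G) * (Quotient.out c).1) (x : X) := (FixK.act K H X n x.toFixK).2 k k.2

lemma Fib.toFixK_act (c : Quotient (weylOrbitSetoid K H)) (n : N) (f : Fib K H X c) :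
    Fib.toFixK K H X c (Fib.act K H X c n f) = FixK.act K H X n (Fib.toFixK K H X c f) := by
  induction f using Quotient.inductionOn with
  | h p => exact Subtype.ext (IndGH.act_mul H X n p.1 p.2.toFixK.1)

variable (K H X) in
noncomputable def sigmaFibToFixK (w : Σ c : Quotient (weylOrbitSetoid K H), Fib K H X c) :
    FixK K H X :=
  Fib.toFixK K H X w.1 w.2

lemma sigmaFibToFixK_injective : Function.Injective (sigmaFibToFixK K H X) := by
  rintro ⟨c, f⟩ ⟨c', f'⟩ hff'
  induction f using Quotient.inductionOn with | h p => ?_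
  induction f' using Quotient.inductionOn with | h q => ?_
  have hpq : mk H ((p.1 : G) * (Quotient.out c).1) (p.2 : X) =
      mk H ((q.1 : G) * (Quotient.out c').1) (q.2 : X) := congrArg Subtype.val hff'
  obtain ⟨h, hq, hy⟩ := mk_eq_mk_iff.1 hpq
  have hc : c = c' := weylOrbit_eq_of_out_eq_mul (mul_mem (inv_mem q.1.2) p.1.2) h.2 <| by
    rw [eq_inv_mul_of_mul_eq hq]; group
  subst hc
  refine congrArg (Sigma.mk c) (Quotient.sound ⟨1, h, ?_, hy⟩)
  rw [eq_mul_inv_of_mul_eq hq]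
  push_cast
  group

lemma sigmaFibToFixK_surjective : Function.Surjective (sigmaFibToFixK K H X) := by
  rintro ⟨z, hz⟩
  induction z using Quotient.inductionOn with | h p => ?_
  obtain ⟨g, x⟩ := p
  obtain ⟨hg, -⟩ := mk_fixed_iff.1 hz
  set c : Quotient (weylOrbitSetoid K H) := Quotient.mk _ ⟨g, hg⟩
  obtain ⟨n, hn, hng⟩ := Quotient.mk_out (s := weylOrbitSetoid K H) ⟨g, hg⟩
  obtain ⟨k, hk, h, hh, hg_eq⟩ := (DoubleCoset.eq K H _ _).1 hng
  let m : N := ⟨k * n, mul_mem (Subgroup.le_normalizer hk) hn⟩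
  have hz_eq : mk H g x = mk H ((m : G) * (Quotient.out c).1) ((⟨h, hh⟩ : H) • x) := by
    have hg_eq' : g = k * (n * (Quotient.out c).1) * h := hg_eq
    rw [← mk_mul_smul, hg_eq']
    congr 1
    show _ = k * n * _ * h
    group
  -- translating back by `m⁻¹` shows that `h • x` is fixed by `g₀⁻¹Kg₀`
  have hfix := fixK_act_normalizer K H X m⁻¹ ⟨mk H g x, hz⟩
  simp only [hz_eq, act_mk, InvMemClass.coe_inv, inv_mul_cancel_left] at hfix
  exact ⟨⟨c, Quotient.mk _ (m, ⟨_, (mk_fixed_iff.1 hfix).2⟩)⟩, Subtype.ext hz_eq.symm⟩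

end

theorem fixed_points_of_induced_weyl_equivariant_decomposition_general
    {G : Type*} [Group G] (K H : Subgroup G)
    (X : Type*) [MulAction H X] :
    ∃ e : FixK K H X ≃ Σ c : Quotient (weylOrbitSetoid K H), Fib K H X c,
      ∀ (n : (Subgroup.normalizer (K : Set G))) (z : FixK K H X),
        e (FixK.act K H X n z) = ⟨(e z).1, Fib.act K H X (e z).1 n (e z).2⟩ := by
  let E := Equiv.ofBijective _ ⟨sigmaFibToFixK_injective (K := K) (H := H) (X := X),
    sigmaFibToFixK_surjective⟩
  refine ⟨E.symm, fun n z => E.symm_apply_eq.2 ?_⟩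
  change _ = Fib.toFixK K H X _ (Fib.act K H X _ n _)
  rw [Fib.toFixK_act]
  exact congrArg _ (E.apply_symm_apply z).symm

/-- For `K, H ≤ G` and a (based) `H`-set `X`, there is a `W_G(K)`-equivariant
bijection between the `K`-fixed points of the induced `G`-set `G ×_H X` and the disjoint
union, over orbits `[KgH] ∈ (K:G:H)/W_G(K)`, of the induced `W_G(K)`-sets
`W_G(K) ×_{W_{gHg⁻¹}(K)} (c_g^* X)^{g⁻¹Kg}`.  Equivariance is expressed via representatives
`n ∈ N_G(K)` of elements of `W_G(K)`. -/
theorem fixed_points_of_induced_weyl_equivariant_decomposition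
    {G : Type*} [Group G] [Fintype G] (K H : Subgroup G)
    (X : Type*) [MulAction H X] :
    ∃ e : FixK K H X ≃ Σ c : Quotient (weylOrbitSetoid K H), Fib K H X c,
      ∀ (n : (Subgroup.normalizer (K : Set G))) (z : FixK K H X),
        e (FixK.act K H X n z) = ⟨(e z).1, Fib.act K H X (e z).1 n (e z).2⟩ :=
  fixed_points_of_induced_weyl_equivariant_decomposition_general K H X
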